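/- Suppose (x, X, y, Y₁₂, α) lacks only (P4a), α₁ = 0, X₁₁ > 0, and α₂ > α₂⁺. Then the point (x, X, y, Y₁₂, (0, α₂⁺)) satisfies all of the conditions (L), (P3), (P4a), (P4b), and (P5). -/

import Mathlib

/-! With `α₁ = 0`, the lower-right 3×3 block of (P4a) has determinant `-p(x₂ - α₂)` for the
quadratic `p = p4aPoly`, and `s := x₂ - α₂⁺` is its smaller root; moreover `X₁₁ s ≤ x₁ X₁₂`.
At `α₂ = α₂⁺`, `θ X₁₁` times the quadratic form of that block is a sum of two squares, so
(P3) and (P4a) hold, and (P4b), (P5) reduce to the 2×2 condition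
`(α₂⁺)² ≤ (y₂ - Y₁₂)(X₂₂ - s)`.
For `t := x₂ - α₂ < s` one has `θ (s - t) < p(t)`, while the principal minors of (P5) at the
old point give `p(t) ≤ θ (X₂₂ - t)` and `α₂² θ + (y₂ - Y₁₂) p(t) ≤ (y₂ - Y₁₂) θ (X₂₂ - t)`.
Together these force `θ > 0`, `s < X₂₂` and `(α₂⁺)² < α₂² ≤ (y₂ - Y₁₂)(X₂₂ - s)`. -/

open Matrix

set_option linter.unusedVariables false

/-- Linear conditions (L). -/
def Lcond (x1 x2 X11 X12 X22 y1 y2 Y12 a1 a2 : ℝ) : Prop :=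
  X11 ≤ x1 ∧ x1 ≤ y1 ∧ X22 ≤ x2 ∧ x2 ≤ y2 ∧
  max 0 (x1 - a1 + x2 - a2 - Y12) ≤ X12 ∧ X12 ≤ min (x1 - a1) (x2 - a2) ∧
  0 ≤ a1 ∧ a1 ≤ y1 - Y12 ∧ 0 ≤ a2 ∧ a2 ≤ y2 - Y12 ∧
  max 0 (y1 + y2 - 1) ≤ Y12 ∧ Y12 ≤ min y1 y2

/-- PSD condition (P3). -/
def P3cond (x1 x2 X11 X12 X22 y1 y2 Y12 a1 a2 : ℝ) : Prop :=
  (!![Y12, x1 - a1, x2 - a2;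
      x1 - a1, x1 - a1, X12;
      x2 - a2, X12, x2 - a2] : Matrix (Fin 3) (Fin 3) ℝ).PosSemidef

/-- PSD condition (P4a). -/
def P4acond (x1 x2 X11 X12 X22 y1 y2 Y12 a1 a2 : ℝ) : Prop :=
  (!![y1 - Y12, 0, a1, 0;
      0, Y12, x1 - a1, x2 - a2;
      a1, x1 - a1, X11, X12;
      0, x2 - a2, X12, x2 - a2] : Matrix (Fin 4) (Fin 4) ℝ).PosSemidef

/-- PSD condition (P4b). -/
def P4bcond (x1 x2 X11 X12 X22 y1 y2 Y12 a1 a2 : ℝ) : Prop :=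
  (!![y2 - Y12, 0, 0, a2;
      0, Y12, x1 - a1, x2 - a2;
      0, x1 - a1, x1 - a1, X12;
      a2, x2 - a2, X12, X22] : Matrix (Fin 4) (Fin 4) ℝ).PosSemidef

/-- PSD condition (P5). -/
def P5cond (x1 x2 X11 X12 X22 y1 y2 Y12 a1 a2 : ℝ) : Prop :=
  (!![y1 - Y12, 0, 0, a1, 0;
      0, y2 - Y12, 0, 0, a2;
      0, 0, Y12, x1 - a1, x2 - a2;
      a1, 0, x1 - a1, X11, X12;
      0, a2, x2 - a2, X12, X22] : Matrix (Fin 5) (Fin 5) ℝ).PosSemidef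

/-- (x, X, y, Y₁₂, α) lacks only (P4a): it satisfies (L), (P3), (P4b), (P5)
but violates (P4a). -/
def LacksOnlyP4a (x1 x2 X11 X12 X22 y1 y2 Y12 a1 a2 : ℝ) : Prop :=
  Lcond x1 x2 X11 X12 X22 y1 y2 Y12 a1 a2 ∧
  P3cond x1 x2 X11 X12 X22 y1 y2 Y12 a1 a2 ∧
  P4bcond x1 x2 X11 X12 X22 y1 y2 Y12 a1 a2 ∧
  P5cond x1 x2 X11 X12 X22 y1 y2 Y12 a1 a2 ∧
  ¬ P4acond x1 x2 X11 X12 X22 y1 y2 Y12 a1 a2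

/-- α₂⁻ = x₂ − X₁₂x₁/X₁₁ − (θ + √Δ)/(2X₁₁), where θ = Y₁₂X₁₁ − x₁² and
Δ = θ(θ + 4X₁₂(x₁ − X₁₂)). -/
noncomputable def alpha2minus (x1 x2 X11 X12 Y12 : ℝ) : ℝ :=
  x2 - X12 * x1 / X11 -
    ((Y12 * X11 - x1 ^ 2) +
      Real.sqrt ((Y12 * X11 - x1 ^ 2) *
        ((Y12 * X11 - x1 ^ 2) + 4 * X12 * (x1 - X12)))) / (2 * X11)

/-- α₂⁺ = x₂ − X₁₂x₁/X₁₁ − (θ − √Δ)/(2X₁₁), where θ = Y₁₂X₁₁ − x₁² and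
Δ = θ(θ + 4X₁₂(x₁ − X₁₂)). -/
noncomputable def alpha2plus (x1 x2 X11 X12 Y12 : ℝ) : ℝ :=
  x2 - X12 * x1 / X11 -
    ((Y12 * X11 - x1 ^ 2) -
      Real.sqrt ((Y12 * X11 - x1 ^ 2) *
        ((Y12 * X11 - x1 ^ 2) + 4 * X12 * (x1 - X12)))) / (2 * X11)

/-- Minus the determinant of the lower-right 3×3 block of (P4a) at `α₁ = 0`, as a function of
`t = x₂ − α₂`; when `Δ ≥ 0` its roots are `x₂ − α₂⁺` and `x₂ − α₂⁻`. -/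
def p4aPoly (x1 X11 X12 Y12 t : ℝ) : ℝ :=
  X11 * t ^ 2 - (Y12 * X11 - x1 ^ 2 + 2 * x1 * X12) * t + Y12 * X12 ^ 2

lemma two_mul_sub_alpha2plus (x1 x2 X12 Y12 : ℝ) {X11 : ℝ} (hX : X11 ≠ 0) :
    2 * X11 * (x2 - alpha2plus x1 x2 X11 X12 Y12) = Y12 * X11 - x1 ^ 2 + 2 * x1 * X12 -
      √((Y12 * X11 - x1 ^ 2) * (Y12 * X11 - x1 ^ 2 + 4 * X12 * (x1 - X12))) := by
  unfold alpha2plus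
  field_simp
  ring

section

variable {x1 x2 X11 X12 Y12 : ℝ}

lemma p4aPoly_sub_alpha2plus (hX : 0 < X11) (hθ : 0 ≤ Y12 * X11 - x1 ^ 2) (hX12 : 0 ≤ X12)
    (hX12x1 : X12 ≤ x1) : p4aPoly x1 X11 X12 Y12 (x2 - alpha2plus x1 x2 X11 X12 Y12) = 0 := by
  have hΔ : 0 ≤ (Y12 * X11 - x1 ^ 2) * (Y12 * X11 - x1 ^ 2 + 4 * X12 * (x1 - X12)) :=
    mul_nonneg hθ (by nlinarith)
  have h2 := two_mul_sub_alpha2plus x1 x2 X12 Y12 hX.ne'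
  set s := x2 - alpha2plus x1 x2 X11 X12 Y12
  set r := √((Y12 * X11 - x1 ^ 2) * (Y12 * X11 - x1 ^ 2 + 4 * X12 * (x1 - X12)))
  have hsq : r ^ 2 = _ := Real.sq_sqrt hΔ
  unfold p4aPoly
  apply mul_left_cancel₀ (by positivity : (4 : ℝ) * X11 ≠ 0)
  -- `4 X₁₁ p(s) = (2 X₁₁ s - (θ + 2 x₁ X₁₂))² - Δ`, and the bracket is `-√Δ`.
  linear_combination (2 * X11 * s - (Y12 * X11 - x1 ^ 2 + 2 * x1 * X12) - r) * h2 + hsq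

lemma mul_sub_alpha2plus_le (hX : 0 < X11) (hθ : 0 ≤ Y12 * X11 - x1 ^ 2) (hX12 : 0 ≤ X12)
    (hX12x1 : X12 ≤ x1) : X11 * (x2 - alpha2plus x1 x2 X11 X12 Y12) ≤ x1 * X12 := by
  have hθΔ : Y12 * X11 - x1 ^ 2 ≤
      √((Y12 * X11 - x1 ^ 2) * (Y12 * X11 - x1 ^ 2 + 4 * X12 * (x1 - X12))) :=
    Real.le_sqrt_of_sq_le (by nlinarith [mul_nonneg hθ (mul_nonneg hX12 (sub_nonneg.2 hX12x1))])
  linarith [two_mul_sub_alpha2plus x1 x2 X12 Y12 hX.ne']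

end

lemma mul_sub_lt_p4aPoly {x1 X11 X12 Y12 s t : ℝ} (hX : 0 < X11)
    (hs : p4aPoly x1 X11 X12 Y12 s = 0) (hsv : X11 * s ≤ x1 * X12) (hts : t < s) :
    (Y12 * X11 - x1 ^ 2) * (s - t) < p4aPoly x1 X11 X12 Y12 t := by
  have hfac : p4aPoly x1 X11 X12 Y12 t - (Y12 * X11 - x1 ^ 2) * (s - t)
      = (s - t) * (X11 * (s - t) + 2 * (x1 * X12 - X11 * s)) := by
    unfold p4aPoly at hs ⊢; linear_combination hs
  have hpos : 0 < (s - t) * (X11 * (s - t) + 2 * (x1 * X12 - X11 * s)) :=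
    mul_pos (sub_pos.2 hts) (by nlinarith [mul_pos hX (sub_pos.2 hts)])
  linarith

lemma binaryForm_nonneg {a b c : ℝ} (ha : 0 < a) (hb : b ^ 2 ≤ a * c) (u w : ℝ) :
    0 ≤ a * u ^ 2 + 2 * b * u * w + c * w ^ 2 := by
  have h : a * (a * u ^ 2 + 2 * b * u * w + c * w ^ 2)
      = (a * u + b * w) ^ 2 + (a * c - b ^ 2) * w ^ 2 := by
    ring
  exact nonneg_of_mul_nonneg_right
    (h ▸ add_nonneg (sq_nonneg _) (mul_nonneg (sub_nonneg.2 hb) (sq_nonneg w))) ha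

lemma p4aBlock_nonneg {x1 X11 X12 Y12 s : ℝ} (hX : 0 < X11) (hθ : 0 < Y12 * X11 - x1 ^ 2)
    (hs : p4aPoly x1 X11 X12 Y12 s = 0) (u v w : ℝ) :
    0 ≤ Y12 * u ^ 2 + 2 * x1 * u * v + 2 * s * u * w + X11 * v ^ 2 + 2 * X12 * v * w
      + s * w ^ 2 := by
  have h : (Y12 * X11 - x1 ^ 2) * X11 *
      (Y12 * u ^ 2 + 2 * x1 * u * v + 2 * s * u * w + X11 * v ^ 2 + 2 * X12 * v * w + s * w ^ 2)
      = (Y12 * X11 - x1 ^ 2) * (x1 * u + X11 * v + X12 * w) ^ 2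
        + ((Y12 * X11 - x1 ^ 2) * u + (X11 * s - x1 * X12) * w) ^ 2 := by
    unfold p4aPoly at hs; linear_combination (-X11 * w ^ 2) * hs
  refine nonneg_of_mul_nonneg_right (h ▸ ?_) (mul_pos hθ hX)
  positivity

namespace P5cond

variable {x1 x2 X11 X12 X22 y1 y2 Y12 a1 a2 : ℝ}

lemma theta_nonneg (h : P5cond x1 x2 X11 X12 X22 y1 y2 Y12 a1 a2) :
    0 ≤ Y12 * X11 - (x1 - a1) ^ 2 := by
  have := (h.submatrix ![2, 3]).det_nonneg
  rw [det_fin_two] at this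
  simpa [sq] using this

lemma p4aPoly_le (h : P5cond x1 x2 X11 X12 X22 y1 y2 Y12 a1 a2) :
    p4aPoly (x1 - a1) X11 X12 Y12 (x2 - a2) ≤ (Y12 * X11 - (x1 - a1) ^ 2) * (X22 - (x2 - a2)) := by
  have := (h.submatrix ![2, 3, 4]).det_nonneg
  rw [det_fin_three] at this
  simp only [submatrix_apply, cons_val_zero, of_apply, cons_val', cons_val, cons_val_fin_one,
    cons_val_one] at this
  unfold p4aPoly
  linarith

lemma sq_mul_add_mul_p4aPoly_le (h : P5cond x1 x2 X11 X12 X22 y1 y2 Y12 a1 a2) :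
    a2 ^ 2 * (Y12 * X11 - (x1 - a1) ^ 2) + (y2 - Y12) * p4aPoly (x1 - a1) X11 X12 Y12 (x2 - a2) ≤
      (y2 - Y12) * ((Y12 * X11 - (x1 - a1) ^ 2) * (X22 - (x2 - a2))) := by
  have := (h.submatrix ![1, 2, 3, 4]).det_nonneg
  rw [det_succ_row_zero] at this
  simp only [Nat.reduceAdd, submatrix, of_apply, cons_val', cons_val_fin_one, cons_val_zero,
    cons_val_one, Fin.succAbove, cons_val_succ, det_fin_three, Fin.castSucc_zero,
    Fin.succ_zero_eq_one, cons_val, Fin.castSucc_one, Fin.succ_one_eq_two, Fin.reduceCastSucc,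
    Fin.reduceSucc, Fin.sum_univ_succ, Fin.coe_ofNat_eq_mod, Nat.zero_mod, lt_self_iff_false,
    ↓reduceIte, not_lt_zero, Fin.val_succ, Fin.succ_pos, Fin.lt_one_iff, Fin.reduceEq,
    Fin.reduceLT, Finset.univ_unique, Fin.default_eq_zero, Fin.val_eq_zero, Finset.sum_singleton]
    at this
  unfold p4aPoly
  linarith

end P5cond

section

variable {x1 x2 X11 X12 X22 y1 y2 Y12 A : ℝ}

lemma P3cond_of_root (hX : 0 < X11) (hθ : 0 < Y12 * X11 - x1 ^ 2)
    (hs : p4aPoly x1 X11 X12 Y12 (x2 - A) = 0) (hX11 : X11 ≤ x1) :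
    P3cond x1 x2 X11 X12 X22 y1 y2 Y12 0 A := by
  refine .of_dotProduct_mulVec_nonneg
    (by ext i j; fin_cases i <;> fin_cases j <;> rfl) fun v => ?_
  simp only [dotProduct, Pi.star_apply, star_trivial, mulVec, of_apply, cons_val',
    cons_val_fin_one, Fin.sum_univ_succ, cons_val_zero, cons_val_succ, Fin.succ_zero_eq_one,
    Fin.succ_one_eq_two, Finset.univ_unique, Fin.default_eq_zero, Finset.sum_singleton]
  linarith [p4aBlock_nonneg hX hθ hs (v 0) (v 1) (v 2),
    mul_nonneg (sub_nonneg.2 hX11) (sq_nonneg (v 1))]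

lemma P4acond_of_root (hX : 0 < X11) (hθ : 0 < Y12 * X11 - x1 ^ 2)
    (hs : p4aPoly x1 X11 X12 Y12 (x2 - A) = 0) (hY : Y12 ≤ y1) :
    P4acond x1 x2 X11 X12 X22 y1 y2 Y12 0 A := by
  refine .of_dotProduct_mulVec_nonneg
    (by ext i j; fin_cases i <;> fin_cases j <;> rfl) fun v => ?_
  simp only [dotProduct, Pi.star_apply, star_trivial, mulVec, of_apply, cons_val',
    cons_val_fin_one, Fin.sum_univ_succ, cons_val_zero, cons_val_succ, Fin.succ_zero_eq_one,
    Fin.succ_one_eq_two, Fin.reduceSucc, Finset.univ_unique, Fin.default_eq_zero,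
    Finset.sum_singleton]
  linarith [p4aBlock_nonneg hX hθ hs (v 1) (v 2) (v 3),
    mul_nonneg (sub_nonneg.2 hY) (sq_nonneg (v 0))]

lemma P4bcond_of_root (hX : 0 < X11) (hθ : 0 < Y12 * X11 - x1 ^ 2)
    (hs : p4aPoly x1 X11 X12 Y12 (x2 - A) = 0) (hX11 : X11 ≤ x1) (hq : 0 < y2 - Y12)
    (hA : A ^ 2 ≤ (y2 - Y12) * (X22 - (x2 - A))) :
    P4bcond x1 x2 X11 X12 X22 y1 y2 Y12 0 A := by
  refine .of_dotProduct_mulVec_nonneg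
    (by ext i j; fin_cases i <;> fin_cases j <;> rfl) fun v => ?_
  simp only [dotProduct, Pi.star_apply, star_trivial, mulVec, of_apply, cons_val',
    cons_val_fin_one, Fin.sum_univ_succ, cons_val_zero, cons_val_succ, Fin.succ_zero_eq_one,
    Fin.succ_one_eq_two, Fin.reduceSucc, Finset.univ_unique, Fin.default_eq_zero,
    Finset.sum_singleton]
  linarith [p4aBlock_nonneg hX hθ hs (v 1) (v 2) (v 3), binaryForm_nonneg hq hA (v 0) (v 3),
    mul_nonneg (sub_nonneg.2 hX11) (sq_nonneg (v 2))]

lemma P5cond_of_root (hX : 0 < X11) (hθ : 0 < Y12 * X11 - x1 ^ 2)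
    (hs : p4aPoly x1 X11 X12 Y12 (x2 - A) = 0) (hY : Y12 ≤ y1) (hq : 0 < y2 - Y12)
    (hA : A ^ 2 ≤ (y2 - Y12) * (X22 - (x2 - A))) :
    P5cond x1 x2 X11 X12 X22 y1 y2 Y12 0 A := by
  refine .of_dotProduct_mulVec_nonneg
    (by ext i j; fin_cases i <;> fin_cases j <;> rfl) fun v => ?_
  simp only [dotProduct, Pi.star_apply, star_trivial, mulVec, of_apply, cons_val',
    cons_val_fin_one, Fin.sum_univ_succ, cons_val_zero, cons_val_succ, Fin.succ_zero_eq_one,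
    Fin.succ_one_eq_two, Fin.reduceSucc, Finset.univ_unique, Fin.default_eq_zero,
    Finset.sum_singleton]
  linarith [p4aBlock_nonneg hX hθ hs (v 2) (v 3) (v 4), binaryForm_nonneg hq hA (v 1) (v 4),
    mul_nonneg (sub_nonneg.2 hY) (sq_nonneg (v 0))]

end

lemma Lcond.of_alpha2_le {x1 x2 X11 X12 X22 y1 y2 Y12 a2 A : ℝ}
    (h : Lcond x1 x2 X11 X12 X22 y1 y2 Y12 0 a2) (hX : 0 < X11) (hθ : 0 ≤ Y12 * X11 - x1 ^ 2)
    (hsv : X11 * (x2 - A) ≤ x1 * X12) (hA0 : 0 ≤ A) (hA : A ≤ a2) :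
    Lcond x1 x2 X11 X12 X22 y1 y2 Y12 0 A := by
  simp only [Lcond, sub_zero] at h ⊢
  obtain ⟨hX11, hx1, hX22, hx2, hRLT, hX12, -, hy1, -, ha2, hY0, hY⟩ := h
  have hX12x1 : X12 ≤ x1 := hX12.trans (min_le_left _ _)
  have hRLT' : x1 + x2 - A - Y12 ≤ X12 := by
    have : X11 * (x1 + x2 - A - Y12 - X12) ≤ 0 := by
      linarith [mul_nonneg (sub_nonneg.2 hX11) (sub_nonneg.2 hX12x1)]
    linarith [nonpos_of_mul_nonpos_right this hX]
  refine ⟨hX11, hx1, hX22, hx2, max_le ((le_max_left _ _).trans hRLT) hRLT',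
    le_min hX12x1 ?_, le_rfl, hy1, hA0, by linarith, hY0, hY⟩
  linarith [hX12.trans (min_le_right _ _)]

/-- If (x, X, y, Y₁₂, α) lacks only (P4a), α₁ = 0, X₁₁ > 0 and α₂ > α₂⁺, then
(x, X, y, Y₁₂, (0, α₂⁺)) satisfies (L), (P3), (P4a), (P4b) and (P5). -/
theorem stmt13 (x1 x2 X11 X12 X22 y1 y2 Y12 a2 : ℝ)
    (h : LacksOnlyP4a x1 x2 X11 X12 X22 y1 y2 Y12 0 a2)
    (hX : 0 < X11) (hgt : alpha2plus x1 x2 X11 X12 Y12 < a2) :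
    Lcond x1 x2 X11 X12 X22 y1 y2 Y12 0 (alpha2plus x1 x2 X11 X12 Y12) ∧
    P3cond x1 x2 X11 X12 X22 y1 y2 Y12 0 (alpha2plus x1 x2 X11 X12 Y12) ∧
    P4acond x1 x2 X11 X12 X22 y1 y2 Y12 0 (alpha2plus x1 x2 X11 X12 Y12) ∧
    P4bcond x1 x2 X11 X12 X22 y1 y2 Y12 0 (alpha2plus x1 x2 X11 X12 Y12) ∧
    P5cond x1 x2 X11 X12 X22 y1 y2 Y12 0 (alpha2plus x1 x2 X11 X12 Y12) := by
  obtain ⟨hL, -, -, hP5, -⟩ := h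
  obtain ⟨hX11, -, hX22, -, hRLT, hX12, -, hy1, -, ha2, -, -⟩ := id hL
  have hX12_0 : 0 ≤ X12 := (le_max_left _ _).trans hRLT
  have hX12x1 : X12 ≤ x1 := by simpa using hX12.trans (min_le_left _ _)
  have hθ0 : 0 ≤ Y12 * X11 - x1 ^ 2 := by simpa using hP5.theta_nonneg
  have hroot := p4aPoly_sub_alpha2plus (x2 := x2) hX hθ0 hX12_0 hX12x1
  have hvert := mul_sub_alpha2plus_le (x2 := x2) hX hθ0 hX12_0 hX12x1
  set A := alpha2plus x1 x2 X11 X12 Y12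
  have hθP := mul_sub_lt_p4aPoly hX hroot hvert (t := x2 - a2) (by linarith)
  have hN := hP5.p4aPoly_le
  have hC := hP5.sq_mul_add_mul_p4aPoly_le
  simp only [sub_zero, sub_sub_sub_cancel_left] at hN hC hθP
  have hθ : 0 < Y12 * X11 - x1 ^ 2 :=
    hθ0.lt_of_ne fun h0 => by rw [← h0] at hθP hN; linarith
  have hAX22 : x2 - A < X22 := by
    linarith [lt_of_mul_lt_mul_of_nonneg_left (hθP.trans_le hN) hθ.le]
  have hq : 0 < y2 - Y12 := by linarith
  have hψ : A ^ 2 ≤ (y2 - Y12) * (X22 - (x2 - A)) := by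
    have ha2X22 : a2 ^ 2 ≤ (y2 - Y12) * (X22 - (x2 - A)) :=
      le_of_mul_le_mul_left (by linarith [mul_le_mul_of_nonneg_left hθP.le hq.le]) hθ
    exact (pow_le_pow_left₀ (by linarith) hgt.le 2).trans ha2X22
  exact ⟨hL.of_alpha2_le hX hθ0 hvert (by linarith) hgt.le, P3cond_of_root hX hθ hroot hX11,
    P4acond_of_root hX hθ hroot (by linarith), P4bcond_of_root hX hθ hroot hX11 hq hψ,
    P5cond_of_root hX hθ hroot (by linarith) hq hψ⟩
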